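/- arXiv:2510.21462 — 2 statements merged into one kernel-verified Lean document; each statement's English description precedes it below -/
import Mathlib

section
/- Let k ≥ 1, c ≥ 1, and ε ∈ ℝ, and let M := (1 − 2ε)·S + ε·(I + J) on the index type Fin c × Fin k. Then M · M₂ = ((1 − 2ε)·k + ε) · M₂, where M₂ := (1/k)·S − (1/(kc))·J. -/
open Matrix Finset

/-- The all-ones matrix on `Fin c × Fin k`. -/
def Jmat (c k : ℕ) : Matrix (Fin c × Fin k) (Fin c × Fin k) ℝ :=
  Matrix.of fun _ _ => 1

/-- The block matrix `S = I_c ⊗ J_k`: `S ((a,p), (b,q)) = 1` iff `a = b`. -/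
def Smat (c k : ℕ) : Matrix (Fin c × Fin k) (Fin c × Fin k) ℝ :=
  Matrix.of fun p q => if p.1 = q.1 then 1 else 0

/-- The projection `M₁ = I − (1/k) S`. -/
noncomputable def M1 (c k : ℕ) : Matrix (Fin c × Fin k) (Fin c × Fin k) ℝ :=
  1 - ((k : ℝ))⁻¹ • Smat c k

/-- The projection `M₂ = (1/k) S − (1/(kc)) J`. -/
noncomputable def M2 (c k : ℕ) : Matrix (Fin c × Fin k) (Fin c × Fin k) ℝ :=
  ((k : ℝ))⁻¹ • Smat c k - ((k : ℝ) * (c : ℝ))⁻¹ • Jmat c k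

/-- The projection `M₃ = (1/(kc)) J`. -/
noncomputable def M3 (c k : ℕ) : Matrix (Fin c × Fin k) (Fin c × Fin k) ℝ :=
  ((k : ℝ) * (c : ℝ))⁻¹ • Jmat c k

/-- The matrix `M = (1 − 2ε) S + ε (I + J)`. -/
noncomputable def Mmat (c k : ℕ) (ε : ℝ) : Matrix (Fin c × Fin k) (Fin c × Fin k) ℝ :=
  (1 - 2 * ε) • Smat c k + ε • ((1 : Matrix (Fin c × Fin k) (Fin c × Fin k) ℝ) + Jmat c k)


lemma S_mul_S (c k : ℕ) : Smat c k * Smat c k = (k : ℝ) • Smat c k := by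
  ext ⟨a, p⟩ ⟨b, q⟩
  simp [Smat, Matrix.mul_apply, Fintype.sum_prod_type, ite_and, Finset.sum_ite_eq,
    mul_ite, mul_one, mul_zero]
  split <;> simp

lemma S_mul_J (c k : ℕ) : Smat c k * Jmat c k = (k : ℝ) • Jmat c k := by
  ext ⟨a, p⟩ ⟨b, q⟩
  rw [Matrix.mul_apply, Fintype.sum_prod_type]
  simp [Smat, Jmat, apply_ite, Finset.sum_ite_eq]

lemma J_mul_S (c k : ℕ) : Jmat c k * Smat c k = (k : ℝ) • Jmat c k := by
  ext ⟨a, p⟩ ⟨b, q⟩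
  rw [Matrix.mul_apply, Fintype.sum_prod_type]
  simp [Smat, Jmat, apply_ite, Finset.sum_ite_eq]

lemma J_mul_J (c k : ℕ) : Jmat c k * Jmat c k = ((c : ℝ) * (k : ℝ)) • Jmat c k := by
  ext ⟨a, p⟩ ⟨b, q⟩
  simp [Jmat, Matrix.mul_apply, Fintype.sum_prod_type]

/-- `M · M₂ = ((1 − 2ε) k + ε) · M₂`. -/
theorem Mmat_mul_M2 {c k : ℕ} (hk : 1 ≤ k) (hc : 1 ≤ c) (ε : ℝ) :
    Mmat c k ε * M2 c k = ((1 - 2 * ε) * (k : ℝ) + ε) • M2 c k := by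
  have hk0 : (k : ℝ) ≠ 0 := Nat.cast_ne_zero.mpr (by omega)
  have hc0 : (c : ℝ) ≠ 0 := Nat.cast_ne_zero.mpr (by omega)
  have hS : Smat c k * M2 c k = (k : ℝ) • M2 c k := by
    rw [M2, Matrix.mul_sub, Matrix.mul_smul, Matrix.mul_smul, S_mul_S, S_mul_J, smul_sub]
    congr 1
    · rw [smul_smul, smul_smul]; congr 1; field_simp
    · rw [smul_smul, smul_smul]; congr 1; field_simp
  have hJ : Jmat c k * M2 c k = 0 := by
    rw [M2, Matrix.mul_sub, Matrix.mul_smul, Matrix.mul_smul, J_mul_S, J_mul_J,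
      smul_smul, smul_smul, sub_eq_zero]
    congr 1
    field_simp
  rw [Mmat, Matrix.add_mul, Matrix.smul_mul, Matrix.smul_mul, Matrix.add_mul,
    Matrix.one_mul, hS, hJ, smul_add, smul_zero, add_zero, smul_smul, add_smul]
end

section
/- Let k ≥ 1 and c ≥ 1, and let 0 < ε < 1/2. Then the matrix M := (1 − 2ε)·S + ε·(I + J) on the index type Fin c × Fin k is invertible, and its inverse is M⁻¹ = λ₁⁻¹·M₁ + λ₂⁻¹·M₂ + λ₃⁻¹·M₃, where λ₁ := ε, λ₂ := (1 − 2ε)·k + ε, λ₃ := k·(1 − 2ε + ε·c) + ε, and M₁ := I − (1/k)·S, M₂ := (1/k)·S − (1/(kc))·J, M₃ := (1/(kc))·J. -/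
open Matrix Finset

/-!
`P = S / k` and `Q = J / (kc)` are idempotents with `PQ = QP = Q` (projections onto the vectors
constant on each class, resp. the constant vectors), so `M₁ = 1 - P`, `M₂ = P - Q`, `M₃ = Q` are
complete orthogonal idempotents. In this basis `M = λ₁ M₁ + λ₂ M₂ + λ₃ M₃`, and as all `λᵢ` are
positive, `∑ λᵢ⁻¹ Mᵢ` is its inverse.
-/

theorem CompleteOrthogonalIdempotents.of_mul_eq_of_mul_eq {R : Type*} [Ring R] {P Q : R}
    (hP : IsIdempotentElem P) (hQ : IsIdempotentElem Q) (hPQ : P * Q = Q) (hQP : Q * P = Q) :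
    CompleteOrthogonalIdempotents ![1 - P, P - Q, Q] := by
  rw [CompleteOrthogonalIdempotents.iff_ortho_complete]
  refine ⟨?_, by simp [Fin.sum_univ_three]⟩
  intro i j hij
  fin_cases i <;> fin_cases j <;> simp_all [mul_sub, sub_mul, hP.eq, hQ.eq]

theorem CompleteOrthogonalIdempotents.sum_smul_mul_sum_inv_smul {K A ι : Type*} [Field K]
    [Ring A] [Algebra K A] [Fintype ι] {e : ι → A} (he : CompleteOrthogonalIdempotents e)
    {μ : ι → K} (hμ : ∀ i, μ i ≠ 0) :
    (∑ i, μ i • e i) * ∑ i, (μ i)⁻¹ • e i = 1 := by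
  classical
  simp only [Finset.sum_mul, Finset.mul_sum, smul_mul_smul_comm, he.mul_eq, smul_ite, smul_zero,
    Finset.sum_ite_eq', Finset.mem_univ, if_true, mul_inv_cancel₀ (hμ _), one_smul, he.complete]

section BlockMatrices

variable (c k : ℕ)

theorem Smat_mul_Smat : Smat c k * Smat c k = (k : ℝ) • Smat c k := by
  ext ⟨a, p⟩ ⟨b, q⟩
  simp [Matrix.mul_apply, Smat, Fintype.sum_prod_type, apply_ite Finset.card,
    apply_ite (Nat.cast : ℕ → ℝ)]

theorem Smat_mul_Jmat : Smat c k * Jmat c k = (k : ℝ) • Jmat c k := by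
  ext ⟨a, p⟩ ⟨b, q⟩
  rw [Matrix.mul_apply, Fintype.sum_prod_type]
  simp [Smat, Jmat, apply_ite Finset.card, apply_ite (Nat.cast : ℕ → ℝ)]

theorem Jmat_mul_Smat : Jmat c k * Smat c k = (k : ℝ) • Jmat c k := by
  ext ⟨a, p⟩ ⟨b, q⟩
  rw [Matrix.mul_apply, Fintype.sum_prod_type]
  simp [Smat, Jmat]

theorem Jmat_mul_Jmat : Jmat c k * Jmat c k = ((k : ℝ) * c) • Jmat c k := by
  ext ⟨a, p⟩ ⟨b, q⟩
  simp [Matrix.mul_apply, Jmat, mul_comm]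

variable {c k}

theorem isIdempotentElem_inv_smul_Smat (hk : k ≠ 0) :
    IsIdempotentElem ((k : ℝ)⁻¹ • Smat c k) := by
  have : (k : ℝ) ≠ 0 := by exact_mod_cast hk
  rw [IsIdempotentElem, smul_mul_smul, Smat_mul_Smat, smul_smul]
  field_simp

theorem isIdempotentElem_inv_smul_Jmat (hk : k ≠ 0) (hc : c ≠ 0) :
    IsIdempotentElem (((k : ℝ) * c)⁻¹ • Jmat c k) := by
  have : (k : ℝ) * c ≠ 0 := by positivity
  rw [IsIdempotentElem, smul_mul_smul, Jmat_mul_Jmat, smul_smul]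
  field_simp

theorem completeOrthogonalIdempotents_M1_M2_M3 (hk : k ≠ 0) (hc : c ≠ 0) :
    CompleteOrthogonalIdempotents ![M1 c k, M2 c k, M3 c k] := by
  have hk' : (k : ℝ) ≠ 0 := by exact_mod_cast hk
  refine .of_mul_eq_of_mul_eq (isIdempotentElem_inv_smul_Smat hk)
    (isIdempotentElem_inv_smul_Jmat hk hc) ?_ ?_
  · rw [smul_mul_smul, Smat_mul_Jmat, smul_smul]
    field_simp
  · rw [smul_mul_smul, Jmat_mul_Smat, smul_smul]
    field_simp

theorem Mmat_eq_sum_smul (hk : k ≠ 0) (hc : c ≠ 0) (ε : ℝ) :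
    Mmat c k ε = ε • M1 c k + ((1 - 2 * ε) * (k : ℝ) + ε) • M2 c k
      + ((k : ℝ) * (1 - 2 * ε + ε * (c : ℝ)) + ε) • M3 c k := by
  have hk' : (k : ℝ) ≠ 0 := by exact_mod_cast hk
  have hc' : (c : ℝ) ≠ 0 := by exact_mod_cast hc
  simp only [Mmat, M1, M2, M3, smul_add, smul_sub, smul_smul]
  match_scalars <;> field_simp <;> ring

end BlockMatrices

/-- For `0 < ε < 1/2`, the matrix `M` is invertible, with inverse
`M⁻¹ = λ₁⁻¹ M₁ + λ₂⁻¹ M₂ + λ₃⁻¹ M₃`. -/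
theorem Mmat_invertible_and_inverse {c k : ℕ} (hk : 1 ≤ k) (hc : 1 ≤ c)
    (ε : ℝ) (hε0 : 0 < ε) (hε : ε < 1 / 2) :
    IsUnit (Mmat c k ε) ∧
    (Mmat c k ε)⁻¹
      = ε⁻¹ • M1 c k
        + ((1 - 2 * ε) * (k : ℝ) + ε)⁻¹ • M2 c k
        + ((k : ℝ) * (1 - 2 * ε + ε * (c : ℝ)) + ε)⁻¹ • M3 c k := by
  have hk0 : k ≠ 0 := by omega
  have hc0 : c ≠ 0 := by omega
  have hk' : (1 : ℝ) ≤ k := by exact_mod_cast hk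
  have hc' : (1 : ℝ) ≤ c := by exact_mod_cast hc
  have hμ₂ : 0 < (1 - 2 * ε) * (k : ℝ) + ε := by nlinarith
  have hμ₃ : 0 < (k : ℝ) * (1 - 2 * ε + ε * (c : ℝ)) + ε := by
    have : 0 < 1 - 2 * ε + ε * (c : ℝ) := by nlinarith
    positivity
  have hinv : Mmat c k ε * (ε⁻¹ • M1 c k + ((1 - 2 * ε) * (k : ℝ) + ε)⁻¹ • M2 c k
      + ((k : ℝ) * (1 - 2 * ε + ε * (c : ℝ)) + ε)⁻¹ • M3 c k) = 1 := by
    simpa [Fin.sum_univ_three, Mmat_eq_sum_smul hk0 hc0] using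
      (completeOrthogonalIdempotents_M1_M2_M3 hk0 hc0).sum_smul_mul_sum_inv_smul
        (μ := ![ε, (1 - 2 * ε) * (k : ℝ) + ε, (k : ℝ) * (1 - 2 * ε + ε * (c : ℝ)) + ε])
        (by simp [Fin.forall_fin_succ, hε0.ne', hμ₂.ne', hμ₃.ne'])
  exact ⟨.of_mul_eq_one _ hinv, Matrix.inv_eq_right_inv hinv⟩
end
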